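/- If 0 < λ < ‖K̂‖_∞^{−1}, then every solution u ∈ X of the equation u = λΓ[u] is isolated: there exists ε > 0 such that no v ∈ X with v = λΓ[v] satisfies 0 < ‖v − u‖_{L²} < ε. -/

import Mathlib

/-!
Any two solutions coincide a.e., so every `ε` works. `Γ[u](θ)` is the mean of `K̂(θ - ·)` under
the Gibbs measure `μ_u ∝ e^{-u}`, and `μ_v` is `μ_u` tilted by `d = u - v`. Along the tilts by
`s • d` the derivative of a mean is a covariance, and `|cov(h, d)| ≤ ‖h‖_∞ 𝔼|d - 𝔼d|
≤ ‖h‖_∞ √Var d ≤ ‖h‖_∞ osc(d) / 2` (Popoviciu). With `h = K̂(θ₀ - ·) - K̂(θ₁ - ·)` this gives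
`osc(λΓ[v] - λΓ[u]) ≤ λ‖K̂‖_∞ osc(v - u)`. Since `v - u = λΓ[v] - λΓ[u]` a.e. and `λ‖K̂‖_∞ < 1`,
`v - u` is a.e. constant, and that constant is `0` because both have mean zero.
-/

open MeasureTheory Filter Topology Real intervalIntegral

/-- `Γ[u](θ) = (∫₀^{2π} e^{-u})⁻¹ ∫₀^{2π} K̂(θ - θ') e^{-u(θ')} dθ'`. -/
noncomputable def Gam (K u : ℝ → ℝ) (θ : ℝ) : ℝ :=
  (∫ t in (0:ℝ)..(2 * π), Real.exp (-(u t)))⁻¹ *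
    ∫ t in (0:ℝ)..(2 * π), K (θ - t) * Real.exp (-(u t))

/-- Membership in `X = {u ∈ L²([0,2π]) : u(θ) = u(θ+π) a.e., u(θ) = u(2π-θ) a.e.,
∫₀^{2π} u = 0}`, for a (2π-periodic) representative `u : ℝ → ℝ`. -/
def MemX (u : ℝ → ℝ) : Prop :=
  MemLp u 2 (volume.restrict (Set.Ioc (0:ℝ) (2 * π))) ∧
  (∀ᵐ θ : ℝ, u (θ + π) = u θ) ∧
  (∀ᵐ θ : ℝ, u (2 * π - θ) = u θ) ∧
  (∫ θ in (0:ℝ)..(2 * π), u θ) = 0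

/-- `‖K̂‖_∞ = sup_{θ ∈ [0,2π]} |K̂(θ)|`. -/
noncomputable def supNorm (K : ℝ → ℝ) : ℝ := ⨆ θ : Set.Icc (0:ℝ) (2 * π), |K θ|

/-- The mean `∫₀^{2π} f dμ_u` of `f` against the probability measure `μ_u` with
density `e^{-u}/∫₀^{2π} e^{-u}`. -/
noncomputable def mAvg (u f : ℝ → ℝ) : ℝ :=
  (∫ t in (0:ℝ)..(2 * π), Real.exp (-(u t)))⁻¹ *
    ∫ t in (0:ℝ)..(2 * π), f t * Real.exp (-(u t))

open Set ProbabilityTheory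

section Tilting

variable {α : Type*} [MeasurableSpace α]

lemma hasDerivAt_integral_mul_exp_mul {μ : Measure α} {f d : α → ℝ} {D : ℝ}
    (hf : Integrable f μ) (hdm : AEStronglyMeasurable d μ) (hd : ∀ᵐ x ∂μ, |d x| ≤ D)
    (s₀ : ℝ) :
    HasDerivAt (fun s => ∫ x, f x * exp (s * d x) ∂μ)
      (∫ x, f x * d x * exp (s₀ * d x) ∂μ) s₀ := by
  have hexp_le : ∀ s x, |s| ≤ |s₀| + 1 → |d x| ≤ D → exp (s * d x) ≤ exp ((|s₀| + 1) * D) :=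
    fun s x hs hx => exp_le_exp.2 <| (le_abs_self _).trans <| (abs_mul s (d x)).trans_le <|
      mul_le_mul hs hx (abs_nonneg _) (by positivity)
  have hmeas : ∀ s : ℝ, AEStronglyMeasurable (fun x => exp (s * d x)) μ := fun s =>
    continuous_exp.comp_aestronglyMeasurable (hdm.const_mul s)
  refine (hasDerivAt_integral_of_dominated_loc_of_deriv_le (Metric.ball_mem_nhds s₀ one_pos)
    (F' := fun s x => f x * d x * exp (s * d x))
    (bound := fun x => ‖f x‖ * (D * exp ((|s₀| + 1) * D)))
    (Filter.Eventually.of_forall fun s => hf.aestronglyMeasurable.mul (hmeas s))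
    (hf.mul_bdd (c := exp ((|s₀| + 1) * D)) (hmeas s₀) ?_)
    ((hf.aestronglyMeasurable.mul hdm).mul (hmeas s₀)) ?_ (hf.norm.mul_const _) ?_).2
  · filter_upwards [hd] with x hx
    rw [norm_of_nonneg (exp_pos _).le]
    exact hexp_le s₀ x (by linarith) hx
  · filter_upwards [hd] with x hx s hs
    have hs' : |s| ≤ |s₀| + 1 := by
      have := abs_sub_abs_le_abs_sub s s₀
      rw [Metric.mem_ball, Real.dist_eq] at hs
      linarith
    rw [norm_mul, norm_mul, norm_of_nonneg (exp_pos _).le, mul_assoc]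
    exact mul_le_mul_of_nonneg_left (mul_le_mul hx (hexp_le s x hs' hx) (exp_pos _).le
      ((abs_nonneg _).trans hx)) (norm_nonneg _)
  · exact Filter.Eventually.of_forall fun x s _ => by
      simpa [mul_comm, mul_left_comm, mul_assoc] using
        ((hasDerivAt_mul_const (d x)).exp.const_mul (f x))

lemma sq_integral_abs_sub_integral_le_variance {P : Measure α} [IsProbabilityMeasure P]
    {X : α → ℝ} (hX : MemLp X 2 P) :
    (∫ x, |X x - ∫ y, X y ∂P| ∂P) ^ 2 ≤ Var[X; P] := by
  set Y : α → ℝ := fun x => |X x - ∫ y, X y ∂P|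
  have hY : MemLp Y 2 P := (hX.sub (memLp_const _)).abs
  have hY2 : ∫ x, (Y ^ 2) x ∂P = Var[X; P] := by
    rw [variance_eq_integral hX.aestronglyMeasurable.aemeasurable]
    simp [Y, sq_abs]
  linarith [variance_nonneg Y P, variance_eq_sub hY]

lemma abs_covariance_le_of_bounded {P : Measure α} [IsProbabilityMeasure P]
    {h d : α → ℝ} {C a b : ℝ} (hhm : AEStronglyMeasurable h P) (hh : ∀ᵐ x ∂P, |h x| ≤ C)
    (hdm : AEStronglyMeasurable d P) (hd : ∀ᵐ x ∂P, d x ∈ Icc a b) :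
    |cov[h, d; P]| ≤ C * ((b - a) / 2) := by
  set m := ∫ x, d x ∂P
  have hdL : MemLp d 2 P := memLp_of_bounded hd hdm 2
  have hcentered_int : Integrable (fun x => d x - m) P :=
    (hdL.integrable one_le_two).sub (integrable_const m)
  have hcov : cov[h, d; P] = ∫ x, h x * (d x - m) ∂P := by
    have hcentered : ∫ x, (d x - m) ∂P = 0 := by
      rw [integral_sub (hdL.integrable one_le_two) (integrable_const m)]
      simp [m]
    simp only [covariance, sub_mul]
    rw [integral_sub (hcentered_int.bdd_mul (c := C) hhm (by simpa using hh))
      (hcentered_int.const_mul _), MeasureTheory.integral_const_mul, hcentered, mul_zero, sub_zero]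
  have hab : a ≤ b := by
    obtain ⟨x, hx⟩ := hd.exists
    exact hx.1.trans hx.2
  have hdev : ∫ x, |d x - m| ∂P ≤ (b - a) / 2 :=
    le_of_sq_le_sq ((sq_integral_abs_sub_integral_le_variance hdL).trans
      (variance_le_sq_of_bounded hd hdm.aemeasurable)) (by linarith)
  have hC : 0 ≤ C := by
    obtain ⟨x, hx⟩ := hh.exists
    exact (abs_nonneg _).trans hx
  calc |cov[h, d; P]| ≤ ∫ x, |h x| * |d x - m| ∂P := by
        rw [hcov]
        simpa only [Real.norm_eq_abs, abs_mul] using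
          norm_integral_le_integral_norm (fun x => h x * (d x - m))
    _ ≤ ∫ x, C * |d x - m| ∂P := by
        refine integral_mono_ae ?_ (hcentered_int.abs.const_mul C) ?_
        · exact hcentered_int.abs.bdd_mul (c := C) hhm.norm (by simpa using hh)
        · filter_upwards [hh] with x hx
          exact mul_le_mul_of_nonneg_right hx (abs_nonneg _)
    _ = C * ∫ x, |d x - m| ∂P := MeasureTheory.integral_const_mul C _
    _ ≤ C * ((b - a) / 2) := mul_le_mul_of_nonneg_left hdev hC

lemma integral_tilted_mul_eq_div {P : Measure α} (f g : α → ℝ) :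
    ∫ x, g x ∂(P.tilted f) = (∫ x, g x * exp (f x) ∂P) / ∫ x, exp (f x) ∂P := by
  rw [integral_tilted, ← MeasureTheory.integral_div]
  simp only [smul_eq_mul]
  congr 1 with x
  ring

lemma integrable_exp_mul_of_abs_le {P : Measure α} [IsFiniteMeasure P] {d : α → ℝ} {D : ℝ}
    (hdm : AEStronglyMeasurable d P) (hd : ∀ᵐ x ∂P, |d x| ≤ D) (s : ℝ) :
    Integrable (fun x => exp (s * d x)) P :=
  (integrable_const (exp (|s| * D))).mono'
    (continuous_exp.comp_aestronglyMeasurable (hdm.const_mul s)) <| hd.mono fun x hx => by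
      rw [norm_of_nonneg (exp_pos _).le, exp_le_exp]
      exact (le_abs_self _).trans ((abs_mul _ _).trans_le
        (mul_le_mul_of_nonneg_left hx (abs_nonneg s)))

lemma hasDerivAt_integral_tilted_mul {P : Measure α} [IsProbabilityMeasure P]
    {h d : α → ℝ} {C D : ℝ} (hhm : AEStronglyMeasurable h P) (hh : ∀ᵐ x ∂P, |h x| ≤ C)
    (hdm : AEStronglyMeasurable d P) (hd : ∀ᵐ x ∂P, |d x| ≤ D) (s₀ : ℝ) :
    HasDerivAt (fun s => ∫ x, h x ∂(P.tilted (fun x => s * d x)))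
      cov[h, d; P.tilted (fun x => s₀ * d x)] s₀ := by
  set Q := P.tilted (fun x => s₀ * d x)
  have hh_int : Integrable h P := (integrable_const C).mono' hhm (by simpa using hh)
  have hexp_int := integrable_exp_mul_of_abs_le hdm hd
  have hZ : HasDerivAt (fun s => ∫ x, 1 * exp (s * d x) ∂P)
      (∫ x, 1 * d x * exp (s₀ * d x) ∂P) s₀ :=
    hasDerivAt_integral_mul_exp_mul (integrable_const 1) hdm hd s₀
  have hN : HasDerivAt (fun s => ∫ x, h x * exp (s * d x) ∂P)
      (∫ x, h x * d x * exp (s₀ * d x) ∂P) s₀ :=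
    hasDerivAt_integral_mul_exp_mul hh_int hdm hd s₀
  simp only [one_mul] at hZ
  have hZpos := integral_exp_pos (hexp_int s₀)
  have : IsProbabilityMeasure Q := isProbabilityMeasure_tilted (hexp_int s₀)
  have hQP : Q ≪ P := tilted_absolutelyContinuous P _
  have hcov : cov[h, d; Q] = (∫ x, h x * d x * exp (s₀ * d x) ∂P) / ∫ x, exp (s₀ * d x) ∂P -
      (∫ x, h x * exp (s₀ * d x) ∂P) / (∫ x, exp (s₀ * d x) ∂P) *
      ((∫ x, d x * exp (s₀ * d x) ∂P) / ∫ x, exp (s₀ * d x) ∂P) := by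
    rw [covariance_eq_sub (memLp_of_bounded (a := -C) (b := C) ?_ (hhm.mono_ac hQP) 2)
      (memLp_of_bounded (a := -D) (b := D) ?_ (hdm.mono_ac hQP) 2)]
    · simp only [Pi.mul_apply, Q, integral_tilted_mul_eq_div]
    · exact hQP.ae_le (hh.mono fun x hx => abs_le.1 hx)
    · exact hQP.ae_le (hd.mono fun x hx => abs_le.1 hx)
  simp only [integral_tilted_mul_eq_div]
  refine (hN.div hZ hZpos.ne').congr_deriv ?_
  rw [hcov]
  generalize ∫ x, h x * d x * exp (s₀ * d x) ∂P = A at *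
  generalize ∫ x, exp (s₀ * d x) ∂P = Z at *
  field_simp

lemma abs_integral_tilted_sub_integral_le {P : Measure α} [IsProbabilityMeasure P]
    {h d : α → ℝ} {C a b : ℝ} (hhm : AEStronglyMeasurable h P) (hh : ∀ᵐ x ∂P, |h x| ≤ C)
    (hdm : AEStronglyMeasurable d P) (hd : ∀ᵐ x ∂P, d x ∈ Icc a b) :
    |∫ x, h x ∂(P.tilted d) - ∫ x, h x ∂P| ≤ C * ((b - a) / 2) := by
  have hd' : ∀ᵐ x ∂P, |d x| ≤ max |a| |b| := hd.mono fun x hx => abs_le_max_abs_abs hx.1 hx.2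
  have hderiv := hasDerivAt_integral_tilted_mul hhm hh hdm hd'
  have hcov_le : ∀ s : ℝ, |cov[h, d; P.tilted (fun x => s * d x)]| ≤ C * ((b - a) / 2) := by
    intro s
    have hQP : P.tilted (fun x => s * d x) ≪ P := tilted_absolutelyContinuous P _
    have : IsProbabilityMeasure (P.tilted (fun x => s * d x)) :=
      isProbabilityMeasure_tilted (integrable_exp_mul_of_abs_le hdm hd' s)
    exact abs_covariance_le_of_bounded (hhm.mono_ac hQP) (hQP.ae_le hh) (hdm.mono_ac hQP)
      (hQP.ae_le hd)
  obtain ⟨c, -, hc⟩ := exists_hasDerivAt_eq_slope _ _ zero_lt_one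
    (fun s _ => (hderiv s).continuousAt.continuousWithinAt) (fun s _ => hderiv s)
  simp only [one_mul, zero_mul, sub_zero, div_one] at hc
  rw [show P.tilted (fun _ => (0 : ℝ)) = P from tilted_zero P] at hc
  exact hc ▸ hcov_le c

end Tilting

local notation "ν" => volume.restrict (Ioc (0 : ℝ) (2 * π))

lemma abs_le_supNorm {K : ℝ → ℝ} (hKc : Continuous K) (hKper : Function.Periodic K (2 * π))
    (x : ℝ) : |K x| ≤ supNorm K := by
  obtain ⟨y, hy, hxy⟩ := hKper.exists_mem_Ico₀ two_pi_pos x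
  rw [hxy]
  obtain ⟨C, hC⟩ := (isCompact_Icc (a := (0 : ℝ)) (b := 2 * π)).exists_bound_of_continuousOn
    hKc.continuousOn
  exact le_ciSup (f := fun θ : Icc (0 : ℝ) (2 * π) => |K θ|)
    ⟨C, by rintro _ ⟨θ, rfl⟩; exact hC θ θ.2⟩ ⟨y, Ico_subset_Icc_self hy⟩

lemma integrable_comp_const_sub {K : ℝ → ℝ} (hKc : Continuous K)
    (hKper : Function.Periodic K (2 * π)) (μ : Measure ℝ) [IsFiniteMeasure μ] (θ : ℝ) :
    Integrable (fun t => K (θ - t)) μ :=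
  (integrable_const (supNorm K)).mono' (by fun_prop) <|
    Eventually.of_forall fun t => abs_le_supNorm hKc hKper (θ - t)

/-- The paper's `μ_u`: `e^{-u}` on `(0, 2π]`, normalized. -/
noncomputable def gibbsMeasure (u : ℝ → ℝ) : Measure ℝ := (ν).tilted fun t => -u t

lemma isProbabilityMeasure_gibbsMeasure {u : ℝ → ℝ}
    (hu : IntervalIntegrable (fun t => exp (-u t)) volume 0 (2 * π)) :
    IsProbabilityMeasure (gibbsMeasure u) := by
  have : NeZero ν := ⟨by simp [Measure.restrict_eq_zero, pi_pos]⟩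
  exact isProbabilityMeasure_tilted
    ((intervalIntegrable_iff_integrableOn_Ioc_of_le two_pi_pos.le).1 hu)

lemma Gam_eq_integral_gibbsMeasure (K u : ℝ → ℝ) (θ : ℝ) :
    Gam K u θ = ∫ t, K (θ - t) ∂(gibbsMeasure u) := by
  rw [gibbsMeasure, integral_tilted_mul_eq_div, Gam, integral_of_le two_pi_pos.le,
    integral_of_le two_pi_pos.le, inv_mul_eq_div]

lemma gibbsMeasure_tilted {u : ℝ → ℝ}
    (hu : IntervalIntegrable (fun t => exp (-u t)) volume 0 (2 * π)) (v : ℝ → ℝ) :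
    (gibbsMeasure u).tilted (fun t => u t - v t) = gibbsMeasure v := by
  rw [gibbsMeasure,
    tilted_tilted ((intervalIntegrable_iff_integrableOn_Ioc_of_le two_pi_pos.le).1 hu)]
  congr 1 with t
  simp only [Pi.add_apply]
  ring

lemma abs_Gam_le {K u : ℝ → ℝ} (hKc : Continuous K) (hKper : Function.Periodic K (2 * π))
    (hu : IntervalIntegrable (fun t => exp (-u t)) volume 0 (2 * π)) (θ : ℝ) :
    |Gam K u θ| ≤ supNorm K := by
  have := isProbabilityMeasure_gibbsMeasure hu
  rw [Gam_eq_integral_gibbsMeasure]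
  simpa using norm_integral_le_of_norm_le_const (μ := gibbsMeasure u)
    (Eventually.of_forall fun t => (norm_eq_abs _).trans_le (abs_le_supNorm hKc hKper (θ - t)))

lemma abs_Gam_sub_Gam_sub_le {K u v : ℝ → ℝ} (hKc : Continuous K)
    (hKper : Function.Periodic K (2 * π)) (hu : Measurable u) (hv : Measurable v)
    (huint : IntervalIntegrable (fun t => exp (-u t)) volume 0 (2 * π))
    (hvint : IntervalIntegrable (fun t => exp (-v t)) volume 0 (2 * π)) {a b : ℝ}
    (hd : ∀ᵐ t ∂ν, u t - v t ∈ Icc a b) (θ₀ θ₁ : ℝ) :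
    |(Gam K v θ₀ - Gam K u θ₀) - (Gam K v θ₁ - Gam K u θ₁)| ≤ supNorm K * (b - a) := by
  have := isProbabilityMeasure_gibbsMeasure huint
  have := isProbabilityMeasure_gibbsMeasure hvint
  have hP : gibbsMeasure u ≪ ν := tilted_absolutelyContinuous _ _
  have key := abs_integral_tilted_sub_integral_le (P := gibbsMeasure u)
    (h := fun t => K (θ₀ - t) - K (θ₁ - t)) (d := fun t => u t - v t) (C := 2 * supNorm K)
    (by fun_prop)
    (Eventually.of_forall fun t => (abs_sub _ _).trans (by
      linarith [abs_le_supNorm hKc hKper (θ₀ - t), abs_le_supNorm hKc hKper (θ₁ - t)]))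
    (hu.sub hv).aestronglyMeasurable (hP.ae_le hd)
  have hKint := integrable_comp_const_sub hKc hKper
  rw [gibbsMeasure_tilted huint, integral_sub (hKint _ _) (hKint _ _),
    integral_sub (hKint _ _) (hKint _ _)] at key
  simp only [← Gam_eq_integral_gibbsMeasure] at key
  rw [show Gam K v θ₀ - Gam K u θ₀ - (Gam K v θ₁ - Gam K u θ₁) =
    Gam K v θ₀ - Gam K v θ₁ - (Gam K u θ₀ - Gam K u θ₁) by ring]
  linarith

lemma eq_ciSup_of_sub_le_mul_oscillation {ι : Type*} [Nonempty ι] {F : ι → ℝ}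
    (hF : BddAbove (range F)) (hF' : BddBelow (range F)) {c : ℝ} (hc : c < 1)
    (hosc : ∀ i j, F i - F j ≤ c * ((⨆ k, F k) - ⨅ k, F k)) (i : ι) : F i = ⨆ k, F k := by
  set S := ⨆ k, F k
  set I := ⨅ k, F k
  have hIS : I ≤ S := (ciInf_le hF' i).trans (le_ciSup hF i)
  have hSI : S ≤ I + c * (S - I) :=
    ciSup_le fun i => by
      linarith [le_ciInf fun j => (by linarith [hosc i j] : F i - c * (S - I) ≤ F j)]
  have : S - I ≤ 0 := by nlinarith
  linarith [ciInf_le hF' i, le_ciSup hF i]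

lemma MemX.intervalIntegrable {u : ℝ → ℝ} (hu : MemX u) :
    IntervalIntegrable u volume 0 (2 * π) :=
  (intervalIntegrable_iff_integrableOn_Ioc_of_le two_pi_pos.le).2 (hu.1.integrable one_le_two)

lemma ae_eq_of_eq_lam_Gam {K : ℝ → ℝ} (hKc : Continuous K)
    (hKper : Function.Periodic K (2 * π)) {lam : ℝ} (hlam0 : 0 < lam)
    (hlam : lam * supNorm K < 1) {u v : ℝ → ℝ} (hu : Measurable u) (hv : Measurable v)
    (huX : MemX u) (hvX : MemX v)
    (huint : IntervalIntegrable (fun t => exp (-u t)) volume 0 (2 * π))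
    (hvint : IntervalIntegrable (fun t => exp (-v t)) volume 0 (2 * π))
    (husol : u =ᵐ[volume] fun θ => lam * Gam K u θ)
    (hvsol : v =ᵐ[volume] fun θ => lam * Gam K v θ) :
    v =ᵐ[volume] u := by
  set F : ℝ → ℝ := fun θ => lam * Gam K v θ - lam * Gam K u θ
  have hF_le : ∀ θ, |F θ| ≤ 2 * lam * supNorm K := fun θ => by
    have := abs_Gam_le hKc hKper huint θ
    have := abs_Gam_le hKc hKper hvint θ
    rw [show F θ = lam * (Gam K v θ - Gam K u θ) by ring, abs_mul, abs_of_pos hlam0]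
    nlinarith [abs_sub (Gam K v θ) (Gam K u θ)]
  have hF : BddAbove (range F) := ⟨_, forall_mem_range.2 fun θ => (abs_le.1 (hF_le θ)).2⟩
  have hF' : BddBelow (range F) := ⟨_, forall_mem_range.2 fun θ => (abs_le.1 (hF_le θ)).1⟩
  have hsub : ∀ᵐ t, v t - u t = F t := by
    filter_upwards [husol, hvsol] with t hut hvt
    rw [hut, hvt]
  have hosc : ∀ θ₀ θ₁, F θ₀ - F θ₁ ≤ lam * supNorm K * ((⨆ θ, F θ) - ⨅ θ, F θ) := by
    intro θ₀ θ₁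
    have hd : ∀ᵐ t ∂ν, u t - v t ∈ Icc (-⨆ θ, F θ) (-⨅ θ, F θ) := by
      refine ae_restrict_of_ae (hsub.mono fun t ht => ?_)
      constructor <;> linarith [ciInf_le hF' t, le_ciSup hF t]
    have := abs_Gam_sub_Gam_sub_le hKc hKper hu hv huint hvint hd θ₀ θ₁
    calc F θ₀ - F θ₁ = lam * ((Gam K v θ₀ - Gam K u θ₀) - (Gam K v θ₁ - Gam K u θ₁)) := by ring
      _ ≤ lam * (supNorm K * (-(⨅ θ, F θ) - -⨆ θ, F θ)) :=
        mul_le_mul_of_nonneg_left ((le_abs_self _).trans this) hlam0.le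
      _ = _ := by ring
  have hconst := eq_ciSup_of_sub_le_mul_oscillation hF hF' hlam hosc
  have hS : (⨆ θ, F θ) = 0 := by
    have hint : ∫ θ in (0 : ℝ)..(2 * π), (v θ - u θ) = 2 * π * ⨆ θ, F θ := by
      rw [intervalIntegral.integral_congr_ae (hsub.mono fun t ht _ => ht.trans (hconst t))]
      simp
    rw [intervalIntegral.integral_sub hvX.intervalIntegrable huX.intervalIntegrable,
      hvX.2.2.2, huX.2.2.2, sub_zero] at hint
    exact (mul_eq_zero.1 hint.symm).resolve_left two_pi_pos.ne'
  filter_upwards [hsub] with t ht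
  linarith [hconst t]

theorem solutions_isolated_general (K : ℝ → ℝ) (hKper : Function.Periodic K (2 * π))
    (hKlip : ∃ C : NNReal, LipschitzWith C K)
    (lam : ℝ) (hlam0 : 0 < lam) (hlam : lam < (supNorm K)⁻¹)
    (u : ℝ → ℝ) (hu : Measurable u)
    (huX : MemX u)
    (huint : IntervalIntegrable (fun t => Real.exp (-(u t))) volume 0 (2 * π))
    (husol : u =ᵐ[volume] fun θ => lam * Gam K u θ) :
    ∃ ε > 0, ∀ v : ℝ → ℝ, Measurable v → Function.Periodic v (2 * π) → MemX v →
      IntervalIntegrable (fun t => Real.exp (-(v t))) volume 0 (2 * π) →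
      (v =ᵐ[volume] fun θ => lam * Gam K v θ) →
      ¬ (0 < (eLpNorm (fun θ => v θ - u θ) 2
                (volume.restrict (Set.Ioc (0:ℝ) (2 * π)))).toReal ∧
          (eLpNorm (fun θ => v θ - u θ) 2
                (volume.restrict (Set.Ioc (0:ℝ) (2 * π)))).toReal < ε) := by
  obtain ⟨C, hC⟩ := hKlip
  have hlam' : lam * supNorm K < 1 := by
    have hK0 : 0 ≤ supNorm K := iSup_nonneg fun _ => abs_nonneg _
    rcases hK0.eq_or_lt with h | h
    · rw [← h, mul_zero]
      exact one_pos
    · simpa [h.ne'] using mul_lt_mul_of_pos_right hlam h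
  refine ⟨1, one_pos, fun v hv _ hvX hvint hvsol ⟨hpos, _⟩ => hpos.ne' ?_⟩
  have hvu := ae_eq_of_eq_lam_Gam hC.continuous hKper hlam0 hlam' hu hv huX hvX huint hvint
    husol hvsol
  rw [eLpNorm_congr_ae (ae_restrict_of_ae (hvu.mono fun t ht => sub_eq_zero.2 ht)),
    show (fun t : ℝ => (0 : ℝ)) = 0 from rfl, eLpNorm_zero, ENNReal.toReal_zero]

/-- If `0 < λ < ‖K̂‖_∞⁻¹`, every solution `u ∈ X` of `u = λΓ[u]` is isolated in `L²`. -/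
theorem solutions_isolated (K : ℝ → ℝ) (hKper : Function.Periodic K (2 * π))
    (hKlip : ∃ C : NNReal, LipschitzWith C K)
    (lam : ℝ) (hlam0 : 0 < lam) (hlam : lam < (supNorm K)⁻¹)
    (u : ℝ → ℝ) (hu : Measurable u) (huper : Function.Periodic u (2 * π))
    (huX : MemX u)
    (huint : IntervalIntegrable (fun t => Real.exp (-(u t))) volume 0 (2 * π))
    (husol : u =ᵐ[volume] fun θ => lam * Gam K u θ) :
    ∃ ε > 0, ∀ v : ℝ → ℝ, Measurable v → Function.Periodic v (2 * π) → MemX v →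
      IntervalIntegrable (fun t => Real.exp (-(v t))) volume 0 (2 * π) →
      (v =ᵐ[volume] fun θ => lam * Gam K v θ) →
      ¬ (0 < (eLpNorm (fun θ => v θ - u θ) 2
                (volume.restrict (Set.Ioc (0:ℝ) (2 * π)))).toReal ∧
          (eLpNorm (fun θ => v θ - u θ) 2
                (volume.restrict (Set.Ioc (0:ℝ) (2 * π)))).toReal < ε) :=
  solutions_isolated_general K hKper hKlip lam hlam0 hlam u hu huX huint husol
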